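/- Let G be the graph product of a finite simple graph Γ = (V,E) with vertex groups (G_v)_{v∈V}, and let A, B ⊆ V each span a complete subgraph of Γ. If x ∈ G(A) and x is conjugate in G to some element y ∈ G(B), then x ∈ G(A ∩ B). -/

import Mathlib

open Monoid

/-- The set of commutator relators defining a graph product. -/
def graphProdRels {V : Type*} (Γ : SimpleGraph V) (G : V → Type*) [∀ v, Group (G v)] :
    Set (CoprodI G) :=
  {x | ∃ (u v : V) (_ : Γ.Adj u v) (g : G u) (h : G v),
    x = (CoprodI.of g)⁻¹ * (CoprodI.of h)⁻¹ * CoprodI.of g * CoprodI.of h}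

/-- The graph product of the graph of groups `(Γ, G)`: the quotient of the free product of the
vertex groups by the normal closure of the commutators of elements of pairs of adjacent vertex
groups. -/
def GraphProduct {V : Type*} (Γ : SimpleGraph V) (G : V → Type*) [∀ v, Group (G v)] : Type _ :=
  CoprodI G ⧸ Subgroup.normalClosure (graphProdRels Γ G)

instance {V : Type*} (Γ : SimpleGraph V) (G : V → Type*) [∀ v, Group (G v)] :
    Group (GraphProduct Γ G) :=
  QuotientGroup.Quotient.group _

/-- The canonical map from a vertex group into the graph product. -/
def GraphProduct.of {V : Type*} (Γ : SimpleGraph V) (G : V → Type*) [∀ v, Group (G v)] (v : V) :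
    G v →* GraphProduct Γ G :=
  (QuotientGroup.mk' _).comp CoprodI.of

/-- `G(A)`: the subgroup of the graph product generated by the images of the vertex groups
`G_a`, `a ∈ A`. -/
def GraphProduct.vsub {V : Type*} (Γ : SimpleGraph V) (G : V → Type*) [∀ v, Group (G v)]
    (A : Set V) : Subgroup (GraphProduct Γ G) :=
  ⨆ a ∈ A, (GraphProduct.of Γ G a).range

/-!
Since distinct vertex groups commute in the direct product `∏ v, G v`, the graph product maps onto
it, which gives a projection `proj v` onto each vertex group; its kernel is normal and
contains `G(B)` whenever `v ∉ B`. So if `x` is conjugate into `G(B)`, then `proj v x = 1` for all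
`v ∉ B`. On the other hand, for a clique `A` the vertex groups of `A` commute pairwise, so every
`x ∈ G(A)` is the product of `of a (proj a x)` over `a ∈ A`, and the factors with `a ∉ B` vanish.
-/

namespace GraphProduct

variable {V : Type*} {Γ : SimpleGraph V} {G : V → Type*} [∀ v, Group (G v)]

theorem of_commute {u v : V} (h : Γ.Adj u v) (g : G u) (k : G v) :
    Commute (of Γ G u g) (of Γ G v k) := by
  have hrel : (of Γ G u g)⁻¹ * (of Γ G v k)⁻¹ * of Γ G u g * of Γ G v k = 1 :=
    (QuotientGroup.eq_one_iff _).2 (Subgroup.subset_normalClosure ⟨u, v, h, g, k, rfl⟩)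
  calc of Γ G u g * of Γ G v k
      = of Γ G v k * of Γ G u g * ((of Γ G u g)⁻¹ * (of Γ G v k)⁻¹ * of Γ G u g * of Γ G v k) := by
        group
    _ = of Γ G v k * of Γ G u g := by rw [hrel, mul_one]

theorem of_mem_vsub {A : Set V} {a : V} (ha : a ∈ A) (g : G a) : of Γ G a g ∈ vsub Γ G A :=
  le_iSup₂_of_le (f := fun a _ => (of Γ G a).range) a ha le_rfl ⟨g, rfl⟩

section Projection

variable [DecidableEq V]

theorem graphProdRels_subset_ker_lift_mulSingle :
    graphProdRels Γ G ⊆ (CoprodI.lift (MonoidHom.mulSingle G)).ker := by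
  rintro _ ⟨u, v, huv, g, k, rfl⟩
  have hcomm := Pi.mulSingle_commute (Γ.ne_of_adj huv) g k
  simp only [SetLike.mem_coe, MonoidHom.mem_ker, map_mul, map_inv, CoprodI.lift_of,
    MonoidHom.mulSingle_apply]
  rw [hcomm.inv_inv.eq]
  group

variable (Γ G) in
def toPi : GraphProduct Γ G →* ∀ v, G v :=
  QuotientGroup.lift _ (CoprodI.lift (MonoidHom.mulSingle G))
    (Subgroup.normalClosure_le_normal graphProdRels_subset_ker_lift_mulSingle)

variable (Γ G) in
def proj (v : V) : GraphProduct Γ G →* G v :=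
  (Pi.evalMonoidHom G v).comp (toPi Γ G)

theorem proj_of (v w : V) (g : G w) : proj Γ G v (of Γ G w g) = Pi.mulSingle w g v :=
  congrFun (CoprodI.lift_of (MonoidHom.mulSingle G) g) v

theorem vsub_le_ker_proj {B : Set V} {v : V} (hv : v ∉ B) : vsub Γ G B ≤ (proj Γ G v).ker :=
  iSup₂_le fun b hb => by
    rintro _ ⟨g, rfl⟩
    rw [MonoidHom.mem_ker, proj_of, Pi.mulSingle_eq_of_ne (ne_of_mem_of_not_mem hb hv).symm]

end Projection

section Clique

variable {A : Set V} (hA : A.Pairwise Γ.Adj)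

include hA in
theorem pairwise_commute_of_pairwise_adj :
    Pairwise fun a b : A => ∀ (g : G a) (k : G b), Commute (of Γ G a g) (of Γ G b k) :=
  fun a b hab => of_commute (hA a.2 b.2 (Subtype.coe_ne_coe.2 hab))

variable [Fintype A]

def cliqueProd : (∀ a : A, G a) →* GraphProduct Γ G :=
  MonoidHom.noncommPiCoprod (fun a : A => of Γ G a) (pairwise_commute_of_pairwise_adj hA)

theorem cliqueProd_proj [DecidableEq V] {z : GraphProduct Γ G} (hz : z ∈ vsub Γ G A) :
    cliqueProd hA (fun a => proj Γ G a z) = z := by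
  suffices vsub Γ G A ≤
      ((cliqueProd hA).comp (MonoidHom.pi fun a : A => proj Γ G a)).eqLocus (MonoidHom.id _) from
    this hz
  refine iSup₂_le fun a ha => ?_
  rintro _ ⟨g, rfl⟩
  have hsingle : (fun b : A => proj Γ G b (of Γ G a g)) = Pi.mulSingle ⟨a, ha⟩ g := by
    simp only [proj_of]
    exact Function.update_comp_eq_of_injective' (1 : ∀ v, G v) Subtype.val_injective ⟨a, ha⟩ g
  change cliqueProd hA (fun b : A => proj Γ G b (of Γ G a g)) = of Γ G a g
  rw [hsingle, cliqueProd, MonoidHom.noncommPiCoprod_mulSingle]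

theorem cliqueProd_mem_vsub_inter {C : Set V} (f : ∀ a : A, G a)
    (hf : ∀ a : A, (a : V) ∉ C → f a = 1) : cliqueProd hA f ∈ vsub Γ G (A ∩ C) := by
  rw [cliqueProd, MonoidHom.noncommPiCoprod_apply]
  refine Subgroup.noncommProd_mem _ _ fun a _ => ?_
  by_cases haC : (a : V) ∈ C
  · exact of_mem_vsub (A := A ∩ C) ⟨a.2, haC⟩ (f a)
  · simp [hf a haC]

end Clique

end GraphProduct

theorem graphProduct_conj_complete_general {V : Type*} [Fintype V] (Γ : SimpleGraph V)
    (G : V → Type*) [∀ v, Group (G v)] (A B : Set V)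
    (hA : A.Pairwise Γ.Adj)
    (x y : GraphProduct Γ G) (hx : x ∈ GraphProduct.vsub Γ G A)
    (hy : y ∈ GraphProduct.vsub Γ G B)
    (hconj : ∃ g : GraphProduct Γ G, g * y * g⁻¹ = x) :
    x ∈ GraphProduct.vsub Γ G (A ∩ B) := by
  classical
  obtain ⟨g, rfl⟩ := hconj
  rw [← GraphProduct.cliqueProd_proj hA hx]
  exact GraphProduct.cliqueProd_mem_vsub_inter hA _ fun a ha =>
    (GraphProduct.proj Γ G a).normal_ker.conj_mem y (GraphProduct.vsub_le_ker_proj ha hy) g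

/-- Let `A, B ⊆ V` each span a complete subgraph.  If `x ∈ G(A)` is conjugate to
an element `y ∈ G(B)`, then `x ∈ G(A ∩ B)`. -/
theorem graphProduct_conj_complete {V : Type*} [Fintype V] (Γ : SimpleGraph V)
    (G : V → Type*) [∀ v, Group (G v)] (A B : Set V)
    (hA : A.Pairwise Γ.Adj) (hB : B.Pairwise Γ.Adj)
    (x y : GraphProduct Γ G) (hx : x ∈ GraphProduct.vsub Γ G A)
    (hy : y ∈ GraphProduct.vsub Γ G B)
    (hconj : ∃ g : GraphProduct Γ G, g * y * g⁻¹ = x) :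
    x ∈ GraphProduct.vsub Γ G (A ∩ B) :=
  graphProduct_conj_complete_general Γ G A B hA x y hx hy hconj
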